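/- The SPH particle system ẍᵢ = −Σⱼ mⱼ (P(ρ̃ᵢ)/ρ̃ᵢ² + P(ρ̃ⱼ)/ρ̃ⱼ²) ∇W_h(xᵢ − xⱼ) conserves the total energy E = Σᵢ mᵢ (½‖ẋᵢ‖² + e(ρ̃ᵢ)), where e'(ρ) = P(ρ)/ρ², along any C² solution: dE/dt = 0. -/

import Mathlib

/-!
Differentiating, the kinetic part contributes `Σᵢ mᵢ ⟪aᵢ, vᵢ⟫` and the internal part, by the chain
rule and `e' = P/ρ²`, contributes `Σᵢ mᵢ cᵢ Σⱼ mⱼ ⟪∇W(xᵢ - xⱼ), vᵢ - vⱼ⟫` with `cᵢ = P(ρ̃ᵢ)/ρ̃ᵢ²`.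
After inserting the equation of motion, the total is a double sum over pairs `(i, j)` whose
summand changes sign when `i` and `j` are swapped, because `∇W` is odd for even `W`;
hence it vanishes.
-/

open Finset
open scoped RealInnerProductSpace

theorem Finset.sum_sum_eq_zero_of_antisymm {ι M : Type*} [AddCommGroup M] [IsAddTorsionFree M]
    (s : Finset ι) (F : ι → ι → M) (hF : ∀ i j, F j i = -F i j) :
    ∑ i ∈ s, ∑ j ∈ s, F i j = 0 := by
  have h : ∑ i ∈ s, ∑ j ∈ s, F i j = -∑ i ∈ s, ∑ j ∈ s, F i j := calc
    _ = ∑ j ∈ s, ∑ i ∈ s, F i j := sum_comm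
    _ = -∑ i ∈ s, ∑ j ∈ s, F i j := by
      simp only [← sum_neg_distrib]
      exact sum_congr rfl fun j _ => sum_congr rfl fun i _ => hF j i
  refine nsmul_right_injective two_ne_zero (show 2 • _ = 2 • (0 : M) from ?_)
  rw [two_nsmul, smul_zero]
  nth_rw 2 [h]
  exact add_neg_cancel _

section Gradient

variable {F : Type*} [NormedAddCommGroup F] [InnerProductSpace ℝ F] [CompleteSpace F]

theorem HasGradientAt.comp_hasDerivAt {f : F → ℝ} {f' : F} {γ : ℝ → F} {γ' : F} {t : ℝ}
    (hf : HasGradientAt f f' (γ t)) (hγ : HasDerivAt γ γ' t) :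
    HasDerivAt (fun s => f (γ s)) ⟪f', γ'⟫ t :=
  (hasGradientAt_iff_hasFDerivAt.mp hf).comp_hasDerivAt t hγ

theorem HasGradientAt.comp_neg {f : F → ℝ} {f' x : F} (hf : HasGradientAt f f' (-x)) :
    HasGradientAt (fun y => f (-y)) (-f') x := by
  rw [hasGradientAt_iff_hasFDerivAt] at hf ⊢
  refine (hf.comp x (hasFDerivAt_id x).neg).congr_fderiv ?_
  ext y
  simp

theorem gradient_neg_of_even {f : F → ℝ} {g : F → F} (heven : ∀ z, f (-z) = f z)
    (hf : ∀ z, HasGradientAt f (g z) z) (z : F) : g (-z) = -g z := by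
  have h := (hf (-z)).comp_neg
  simp only [heven] at h
  rw [(hf z).unique h, neg_neg]

theorem hasDerivAt_kernel_sum {ι : Type*} [Fintype ι] (m : ι → ℝ) {W : F → ℝ}
    {gradW : F → F} (hW : ∀ z, HasGradientAt W (gradW z) z) {x v : ι → ℝ → F} {t : ℝ}
    (hx : ∀ j, HasDerivAt (x j) (v j t) t) (i : ι) :
    HasDerivAt (fun s => ∑ j, m j * W (x i s - x j s))
      (∑ j, m j * ⟪gradW (x i t - x j t), v i t - v j t⟫) t :=
  HasDerivAt.fun_sum fun j _ => ((hW _).comp_hasDerivAt ((hx i).sub (hx j))).const_mul (m j)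

end Gradient

theorem sum_mul_inner_pairwise_force_eq_zero {ι F : Type*} [Fintype ι] [NormedAddCommGroup F]
    [InnerProductSpace ℝ F] (m c : ι → ℝ) (g : ι → ι → F) (hg : ∀ i j, g j i = -g i j)
    (v : ι → F) :
    ∑ i, m i * (⟪-∑ j, m j • ((c i + c j) • g i j), v i⟫
      + c i * ∑ j, m j * ⟪g i j, v i - v j⟫) = 0 := by
  set F : ι → ι → ℝ := fun i j => m i * m j * (-(c j * ⟪g i j, v i⟫) - c i * ⟪g i j, v j⟫)
  have hF : ∀ i j, F j i = -F i j := by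
    intro i j
    simp only [F, hg i j, inner_neg_left]
    ring
  rw [← Finset.sum_sum_eq_zero_of_antisymm univ F hF]
  refine sum_congr rfl fun i _ => ?_
  simp only [inner_neg_left, sum_inner, real_inner_smul_left, inner_sub_right, mul_sum,
    ← sum_neg_distrib, ← sum_add_distrib]
  exact sum_congr rfl fun j _ => by ring

theorem stmt9_general {d N : ℕ} (m : Fin N → ℝ)
    (W : EuclideanSpace ℝ (Fin d) → ℝ)
    (gradW : EuclideanSpace ℝ (Fin d) → EuclideanSpace ℝ (Fin d))
    (hWeven : ∀ z, W (-z) = W z)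
    (hW : ∀ z, HasGradientAt W (gradW z) z)
    (e P : ℝ → ℝ) (he : ∀ r : ℝ, 0 < r → HasDerivAt e (P r / r ^ 2) r)
    (x v a : Fin N → ℝ → EuclideanSpace ℝ (Fin d))
    (hx : ∀ i t, HasDerivAt (x i) (v i t) t)
    (hv : ∀ i t, HasDerivAt (v i) (a i t) t)
    (ρ : Fin N → ℝ → ℝ) (hρ : ∀ i t, ρ i t = ∑ j, m j * W (x i t - x j t))
    (hpos : ∀ i t, 0 < ρ i t)
    (heq : ∀ i t, a i t = -∑ j, m j •
      ((P (ρ i t) / (ρ i t) ^ 2 + P (ρ j t) / (ρ j t) ^ 2) •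
        gradW (x i t - x j t))) :
    ∀ t : ℝ, HasDerivAt
      (fun s => ∑ i, m i * ((1 / 2) * ‖v i s‖ ^ 2 + e (ρ i s))) 0 t := by
  intro t
  have hρ' (i : Fin N) := funext (hρ i) ▸ hasDerivAt_kernel_sum m hW (fun j => hx j t) i
  have hE (i : Fin N) :=
    (((hv i t).norm_sq.const_mul (1 / 2)).add ((he _ (hpos i t)).comp t (hρ' i))).const_mul (m i)
  refine (HasDerivAt.fun_sum fun i _ => hE i).congr_deriv ?_
  have hg : ∀ i j, gradW (x j t - x i t) = -gradW (x i t - x j t) := fun i j => by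
    rw [← neg_sub, gradient_neg_of_even hWeven hW]
  rw [← sum_mul_inner_pairwise_force_eq_zero m (fun i => P (ρ i t) / ρ i t ^ 2) _ hg (v · t)]
  symm
  refine sum_congr rfl fun i _ => ?_
  rw [← heq, real_inner_comm]
  ring

theorem stmt9 {d N : ℕ} (m : Fin N → ℝ) (hm : ∀ i, 0 < m i)
    (W : EuclideanSpace ℝ (Fin d) → ℝ)
    (gradW : EuclideanSpace ℝ (Fin d) → EuclideanSpace ℝ (Fin d))
    (hWeven : ∀ z, W (-z) = W z)
    (hW : ∀ z, HasGradientAt W (gradW z) z)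
    (e P : ℝ → ℝ) (he : ∀ r : ℝ, 0 < r → HasDerivAt e (P r / r ^ 2) r)
    (x v a : Fin N → ℝ → EuclideanSpace ℝ (Fin d))
    (hx : ∀ i t, HasDerivAt (x i) (v i t) t)
    (hv : ∀ i t, HasDerivAt (v i) (a i t) t)
    (ρ : Fin N → ℝ → ℝ) (hρ : ∀ i t, ρ i t = ∑ j, m j * W (x i t - x j t))
    (hpos : ∀ i t, 0 < ρ i t)
    (heq : ∀ i t, a i t = -∑ j, m j •
      ((P (ρ i t) / (ρ i t) ^ 2 + P (ρ j t) / (ρ j t) ^ 2) •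
        gradW (x i t - x j t))) :
    ∀ t : ℝ, HasDerivAt
      (fun s => ∑ i, m i * ((1 / 2) * ‖v i s‖ ^ 2 + e (ρ i s))) 0 t :=
  stmt9_general m W gradW hWeven hW e P he x v a hx hv ρ hρ hpos heq
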